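/- arXiv:2502.00215 — 2 statements merged into one kernel-verified Lean document; each statement's English description precedes it below -/
import Mathlib

section
/- Let a < b be real numbers, m a positive integer, g_j : ℝ^d × ℝ → ℝ continuous for j = 1,…,m, and q_j : ℝ → ℝ continuous exterior penalty functions (q_j(z) = 0 for z ≤ 0, q_j(z) > 0 for z > 0); define Λ(x,t) := Σ_{j=1}^m q_j(g_j(x,t)). Let x : ℝ → ℝ^d and t : ℝ → ℝ be continuous on [a,b] and let s : ℝ → ℝ be continuous on [a,b] with s(τ) > 0 on [a,b]. Then g_j(x(τ), t(τ)) ≤ 0 for all j = 1,…,m and all τ ∈ [a,b] if and only if there exists y : ℝ → ℝ, differentiable on [a,b], with y'(τ) = s(τ)·Λ(x(τ), t(τ)) for all τ ∈ [a,b] and y(a) = y(b). -/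
/-!
A penalty built from exterior penalty functions is nonnegative and vanishes exactly where all
constraints hold, so `y' = s·Λ ≥ 0` makes `y` monotone on `[a,b]`. Then `y a = y b` forces `y`
to be constant there, hence `y' = 0` on `[a,b]`, and `s > 0` gives `Λ = 0`, i.e. the constraints.
Conversely, if the constraints hold then `Λ = 0` along the arc and any constant `y` works.
-/

open Set Finset

structure IsExteriorPenalty (q : ℝ → ℝ) : Prop where
  eq_zero_of_nonpos : ∀ z ≤ 0, q z = 0
  pos_of_pos : ∀ z, 0 < z → 0 < q z

namespace IsExteriorPenalty

variable {q : ℝ → ℝ}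

theorem nonneg (hq : IsExteriorPenalty q) (z : ℝ) : 0 ≤ q z := by
  rcases le_or_gt z 0 with hz | hz
  · exact (hq.eq_zero_of_nonpos z hz).ge
  · exact (hq.pos_of_pos z hz).le

theorem eq_zero_iff (hq : IsExteriorPenalty q) {z : ℝ} : q z = 0 ↔ z ≤ 0 :=
  ⟨fun h => not_lt.mp fun hz => (hq.pos_of_pos z hz).ne' h, hq.eq_zero_of_nonpos z⟩

end IsExteriorPenalty

theorem sum_exteriorPenalty_eq_zero_iff {ι : Type*} {q : ι → ℝ → ℝ}
    (hq : ∀ j, IsExteriorPenalty (q j)) (S : Finset ι) (z : ι → ℝ) :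
    ∑ j ∈ S, q j (z j) = 0 ↔ ∀ j ∈ S, z j ≤ 0 := by
  rw [Finset.sum_eq_zero_iff_of_nonneg fun j _ => (hq j).nonneg _]
  exact forall₂_congr fun j _ => (hq j).eq_zero_iff

theorem sum_exteriorPenalty_nonneg {ι : Type*} {q : ι → ℝ → ℝ}
    (hq : ∀ j, IsExteriorPenalty (q j)) (S : Finset ι) (z : ι → ℝ) :
    0 ≤ ∑ j ∈ S, q j (z j) :=
  Finset.sum_nonneg fun j _ => (hq j).nonneg _

theorem eqOn_zero_of_hasDerivWithinAt_Icc_of_nonneg_of_eq {y f : ℝ → ℝ} {a b : ℝ} (hab : a < b)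
    (hy : ∀ τ ∈ Icc a b, HasDerivWithinAt y (f τ) (Icc a b) τ)
    (hf : ∀ τ ∈ Icc a b, 0 ≤ f τ) (hyab : y a = y b) :
    EqOn f 0 (Icc a b) := by
  have hmono : MonotoneOn y (Icc a b) := by
    refine monotoneOn_of_hasDerivWithinAt_nonneg (convex_Icc a b)
      (HasDerivWithinAt.continuousOn hy) (fun τ hτ => ?_) fun τ hτ => hf τ (interior_subset hτ)
    rw [interior_Icc] at hτ ⊢
    exact ((hy τ (Ioo_subset_Icc_self hτ)).hasDerivAt (Icc_mem_nhds hτ.1 hτ.2)).hasDerivWithinAt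
  have ha : a ∈ Icc a b := left_mem_Icc.mpr hab.le
  have hb : b ∈ Icc a b := right_mem_Icc.mpr hab.le
  have hconst : EqOn y (fun _ => y a) (Icc a b) := fun τ hτ =>
    le_antisymm (hyab ▸ hmono hτ hb hτ.2) (hmono ha hτ hτ.1)
  intro τ hτ
  exact (uniqueDiffOn_Icc hab τ hτ).eq_deriv _ (hy τ hτ)
    ((hasDerivWithinAt_const τ _ (y a)).congr hconst (hconst hτ))

theorem path_constraints_iff_isoperimetric_single_arc_general
    (d m : ℕ) (a b : ℝ) (hab : a < b)
    (g : Fin m → (Fin d → ℝ) × ℝ → ℝ)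
    (q : Fin m → ℝ → ℝ)
    (hq_zero : ∀ j : Fin m, ∀ z : ℝ, z ≤ 0 → q j z = 0)
    (hq_pos : ∀ j : Fin m, ∀ z : ℝ, 0 < z → 0 < q j z)
    (Λ : (Fin d → ℝ) × ℝ → ℝ)
    (hΛ : ∀ x t, Λ (x, t) = ∑ j : Fin m, q j (g j (x, t)))
    (x : ℝ → Fin d → ℝ)
    (t : ℝ → ℝ)
    (s : ℝ → ℝ)
    (hs_pos : ∀ τ ∈ Set.Icc a b, 0 < s τ) :
    (∀ j : Fin m, ∀ τ ∈ Set.Icc a b, g j (x τ, t τ) ≤ 0) ↔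
    (∃ y : ℝ → ℝ,
        (∀ τ ∈ Set.Icc a b,
          HasDerivWithinAt y (s τ * Λ (x τ, t τ)) (Set.Icc a b) τ) ∧
        y a = y b) := by
  have hq : ∀ j, IsExteriorPenalty (q j) := fun j => ⟨hq_zero j, hq_pos j⟩
  have hΛ_eq_zero : ∀ τ, Λ (x τ, t τ) = 0 ↔ ∀ j, g j (x τ, t τ) ≤ 0 := fun τ => by
    simpa [hΛ] using sum_exteriorPenalty_eq_zero_iff hq univ fun j => g j (x τ, t τ)
  constructor
  · intro hcon
    refine ⟨fun _ => 0, fun τ hτ => ?_, rfl⟩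
    rw [(hΛ_eq_zero τ).mpr fun j => hcon j τ hτ, mul_zero]
    exact hasDerivWithinAt_const τ _ 0
  · rintro ⟨y, hy, hyab⟩ j τ hτ
    have hf_nonneg : ∀ τ ∈ Icc a b, 0 ≤ s τ * Λ (x τ, t τ) := fun τ hτ =>
      mul_nonneg (hs_pos τ hτ).le (hΛ (x τ) (t τ) ▸ sum_exteriorPenalty_nonneg hq univ _)
    have hf_zero := eqOn_zero_of_hasDerivWithinAt_Icc_of_nonneg_of_eq hab hy hf_nonneg hyab hτ
    exact (hΛ_eq_zero τ).mp ((mul_eq_zero.mp hf_zero).resolve_left (hs_pos τ hτ).ne') j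

/-- Single-arc form of the isoperimetric reformulation of path constraints:
the path constraints `gⱼ(x(τ), t(τ)) ≤ 0` hold for all `τ ∈ [a,b]` iff there exists an
auxiliary state `y` with `y' = s·Λ(x,t)` on `[a,b]` and `y a = y b`, where
`Λ(x,t) = ∑ⱼ qⱼ(gⱼ(x,t))` is built from exterior penalty functions. -/
theorem path_constraints_iff_isoperimetric_single_arc
    (d m : ℕ) (hm : 0 < m) (a b : ℝ) (hab : a < b)
    (g : Fin m → (Fin d → ℝ) × ℝ → ℝ) (hg_cont : ∀ j, Continuous (g j))
    (q : Fin m → ℝ → ℝ) (hq_cont : ∀ j, Continuous (q j))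
    (hq_zero : ∀ j : Fin m, ∀ z : ℝ, z ≤ 0 → q j z = 0)
    (hq_pos : ∀ j : Fin m, ∀ z : ℝ, 0 < z → 0 < q j z)
    (Λ : (Fin d → ℝ) × ℝ → ℝ)
    (hΛ : ∀ x t, Λ (x, t) = ∑ j : Fin m, q j (g j (x, t)))
    (x : ℝ → Fin d → ℝ) (hx_cont : ContinuousOn x (Set.Icc a b))
    (t : ℝ → ℝ) (ht_cont : ContinuousOn t (Set.Icc a b))
    (s : ℝ → ℝ) (hs_cont : ContinuousOn s (Set.Icc a b))
    (hs_pos : ∀ τ ∈ Set.Icc a b, 0 < s τ) :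
    (∀ j : Fin m, ∀ τ ∈ Set.Icc a b, g j (x τ, t τ) ≤ 0) ↔
    (∃ y : ℝ → ℝ,
        (∀ τ ∈ Set.Icc a b,
          HasDerivWithinAt y (s τ * Λ (x τ, t τ)) (Set.Icc a b) τ) ∧
        y a = y b) :=
  path_constraints_iff_isoperimetric_single_arc_general d m a b hab g q hq_zero hq_pos Λ hΛ x t s
    hs_pos
end

section
/- Let α, β > 0, let J : ℝ^n → ℝ ∪ {+∞} be proper, lower semicontinuous and convex, let H : ℝ^m → ℝ be convex and α-Lipschitz continuous, and let c : ℝ^n → ℝ^m be continuously differentiable with β-Lipschitz continuous Jacobian (i.e., ‖∇c(z) − ∇c(w)‖ ≤ β‖z − w‖ in operator norm for all z, w). Define Θ(z) := J(z) + H(c(z)), and for ρ > 0 define the subproblem Θ^ρ(z; w) := J(z) + H(c(w) + ∇c(w)(z − w)) + (1/(2ρ))‖z − w‖₂². Fix z ∈ ℝ^n with Θ(z) < +∞ and let z₊ be the unique minimizer of Θ^ρ(·; z), and set G_ρ(z) := (z − z₊)/ρ. If ρ ≤ 1/(αβ), then Θ(z₊) ≤ Θ(z) − (1/ρ − αβ)·‖ρ·G_ρ(z)‖₂²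 = Θ(z) − (1/ρ − αβ)·‖z − z₊‖₂². -/
/-!
The linearized objective `J + H (c z + ∇c(z) (· - z))` is convex, so comparing the subproblem
at its minimizer `z₊` with the points `θ z + (1 - θ) z₊` of the segment and letting `θ → 0`
gives the three-point inequality
`J z₊ + H (c z + ∇c(z) (z₊ - z)) + ‖z₊ - z‖² / ρ ≤ Θ z`.
The `β`-Lipschitz Jacobian bounds the linearization error of `c` at `z₊` by `β ‖z₊ - z‖²`,
so replacing the model by `H (c z₊)` costs at most `α β ‖z₊ - z‖²`.
-/

open Set Filter Topology
open scoped NNReal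

theorem add_div_le_of_forall_le_convexComb {a b D ρ : ℝ} (hρ : 0 < ρ)
    (h : ∀ θ ∈ Ioc (0 : ℝ) 1,
      a + 1 / (2 * ρ) * D ≤ θ * b + (1 - θ) * a + 1 / (2 * ρ) * ((1 - θ) ^ 2 * D)) :
    a + 1 / ρ * D ≤ b := by
  -- `h θ` divided by `θ` reads `a + (2 - θ) D / (2ρ) ≤ b`; let `θ → 0⁺`.
  have hcont : Continuous fun θ : ℝ => a + 1 / (2 * ρ) * (2 - θ) * D := by fun_prop
  have hlim : Tendsto (fun θ : ℝ => a + 1 / (2 * ρ) * (2 - θ) * D) (𝓝[>] 0)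
      (𝓝 (a + 1 / ρ * D)) := by
    convert hcont.continuousWithinAt.tendsto using 2
    field_simp
    ring
  refine le_of_tendsto hlim ?_
  filter_upwards [Ioc_mem_nhdsGT (zero_lt_one' ℝ)] with θ hθ
  have hθb : θ * (a + 1 / (2 * ρ) * (2 - θ) * D) ≤ θ * b := by nlinarith [h θ hθ]
  exact le_of_mul_le_mul_left hθb hθ.1

section Normed

variable {E F : Type*} [NormedAddCommGroup E] [NormedSpace ℝ E]
  [NormedAddCommGroup F] [NormedSpace ℝ F]

theorem ConvexOn.add_norm_sq_le_of_isMinOn_prox {f : E → ℝ} {s : Set E} (hf : ConvexOn ℝ s f)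
    {ρ : ℝ} (hρ : 0 < ρ) {z zp : E} (hz : z ∈ s) (hzp : zp ∈ s)
    (hmin : IsMinOn (fun x => f x + 1 / (2 * ρ) * ‖x - z‖ ^ 2) s zp) :
    f zp + 1 / ρ * ‖zp - z‖ ^ 2 ≤ f z := by
  refine add_div_le_of_forall_le_convexComb hρ fun θ hθ => ?_
  have hθ' : 0 ≤ 1 - θ := sub_nonneg.2 hθ.2
  have hdist : θ • z + (1 - θ) • zp - z = (1 - θ) • (zp - z) := by module
  calc f zp + 1 / (2 * ρ) * ‖zp - z‖ ^ 2
      ≤ f (θ • z + (1 - θ) • zp) + 1 / (2 * ρ) * ‖θ • z + (1 - θ) • zp - z‖ ^ 2 :=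
        hmin (hf.1 hz hzp hθ.1.le hθ' (by ring))
    _ ≤ θ * f z + (1 - θ) * f zp + 1 / (2 * ρ) * ((1 - θ) ^ 2 * ‖zp - z‖ ^ 2) := by
        rw [hdist, norm_smul, Real.norm_of_nonneg hθ', mul_pow]
        gcongr
        exact hf.2 hz hzp hθ.1.le hθ' (by ring)

theorem convexOn_toReal_setOf_ne_top {J : E → EReal} (hJ_ne_bot : ∀ x, J x ≠ ⊥)
    (hJ_convex : ∀ x y : E, ∀ θ : ℝ, 0 ≤ θ → θ ≤ 1 →
      J (θ • x + (1 - θ) • y) ≤ ((θ : ℝ) : EReal) * J x + (((1 - θ) : ℝ) : EReal) * J y) :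
    ConvexOn ℝ {x | J x ≠ ⊤} fun x => (J x).toReal := by
  have hcomb : ∀ x ∈ {x | J x ≠ ⊤}, ∀ y ∈ {x | J x ≠ ⊤}, ∀ a b : ℝ, 0 ≤ a → 0 ≤ b → a + b = 1 →
      J (a • x + b • y) ≤ ((a * (J x).toReal + b * (J y).toReal : ℝ) : EReal) := by
    rintro x hx y hy a b ha hb hab
    obtain rfl : b = 1 - a := by linarith
    rw [EReal.coe_add, EReal.coe_mul, EReal.coe_mul, EReal.coe_toReal hx (hJ_ne_bot x),
      EReal.coe_toReal hy (hJ_ne_bot y)]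
    exact hJ_convex x y a ha (by linarith)
  refine ⟨fun x hx y hy a b ha hb hab => ?_, fun x hx y hy a b ha hb hab => ?_⟩
  · exact ((hcomb x hx y hy a b ha hb hab).trans_lt (EReal.coe_lt_top _)).ne
  · have h := EReal.toReal_le_toReal (hcomb x hx y hy a b ha hb hab) (hJ_ne_bot _)
      (EReal.coe_ne_top _)
    rwa [EReal.toReal_coe] at h

theorem norm_sub_sub_fderiv_le_of_lipschitzWith_fderiv {f : E → F} (hf : Differentiable ℝ f)
    {K : ℝ≥0} (hK : LipschitzWith K (fderiv ℝ f)) (x y : E) :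
    ‖f y - f x - fderiv ℝ f x (y - x)‖ ≤ K * ‖y - x‖ ^ 2 := by
  have hderiv : ∀ w ∈ segment ℝ x y, ‖fderiv ℝ f w - fderiv ℝ f x‖ ≤ K * ‖y - x‖ :=
    fun w hw => by
      rw [← dist_eq_norm]
      exact (hK.dist_le_mul w x).trans
        (by rw [dist_eq_norm]; gcongr; exact norm_sub_le_of_mem_segment hw)
  calc ‖f y - f x - fderiv ℝ f x (y - x)‖ ≤ K * ‖y - x‖ * ‖y - x‖ :=
        (convex_segment x y).norm_image_sub_le_of_norm_fderiv_le' (fun w _ => hf w) hderiv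
          (left_mem_segment ℝ x y) (right_mem_segment ℝ x y)
    _ = K * ‖y - x‖ ^ 2 := by ring

theorem LipschitzWith.le_add_of_lipschitzWith_fderiv {H : F → ℝ} {α : ℝ≥0}
    (hH : LipschitzWith α H) {c : E → F} (hc : Differentiable ℝ c) {β : ℝ≥0}
    (hc' : LipschitzWith β (fderiv ℝ c)) (x y : E) :
    H (c y) ≤ H (c x + fderiv ℝ c x (y - x)) + α * β * ‖y - x‖ ^ 2 := by
  have hH' := hH.dist_le_mul (c y) (c x + fderiv ℝ c x (y - x))
  rw [Real.dist_eq, dist_eq_norm, sub_add_eq_sub_sub] at hH'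
  have := norm_sub_sub_fderiv_le_of_lipschitzWith_fderiv hc hc' x y
  nlinarith [le_abs_self (H (c y) - H (c x + fderiv ℝ c x (y - x))), α.2]

end Normed

theorem proxlinear_monotone_decrease_general
    (n m : ℕ) (α β ρ : ℝ) (hα : 0 < α) (hβ : 0 < β) (hρ : 0 < ρ)
    (J : EuclideanSpace ℝ (Fin n) → EReal)
    (hJ_ne_bot : ∀ z, J z ≠ ⊥)
    (hJ_convex : ∀ z w : EuclideanSpace ℝ (Fin n), ∀ θ : ℝ, 0 ≤ θ → θ ≤ 1 →
      J (θ • z + (1 - θ) • w) ≤ ((θ : ℝ) : EReal) * J z + (((1 - θ) : ℝ) : EReal) * J w)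
    (H : EuclideanSpace ℝ (Fin m) → ℝ)
    (hH_convex : ConvexOn ℝ Set.univ H)
    (hH_lip : LipschitzWith ⟨α, hα.le⟩ H)
    (c : EuclideanSpace ℝ (Fin n) → EuclideanSpace ℝ (Fin m))
    (hc : ContDiff ℝ 1 c)
    (hc_lip : LipschitzWith ⟨β, hβ.le⟩ (fderiv ℝ c))
    (Θ : EuclideanSpace ℝ (Fin n) → EReal)
    (hΘ : ∀ z, Θ z = J z + ((H (c z) : ℝ) : EReal))
    (Θρ : EuclideanSpace ℝ (Fin n) → EuclideanSpace ℝ (Fin n) → EReal)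
    (hΘρ : ∀ z w, Θρ z w =
      J z + ((H (c w + fderiv ℝ c w (z - w)) : ℝ) : EReal)
        + ((1 / (2 * ρ) * ‖z - w‖ ^ 2 : ℝ) : EReal))
    (z zp : EuclideanSpace ℝ (Fin n))
    (hz_fin : Θ z < ⊤)
    (hzp_min : ∀ z', Θρ zp z ≤ Θρ z' z) :
    Θ zp ≤ Θ z - (((1 / ρ - α * β) * ‖z - zp‖ ^ 2 : ℝ) : EReal) := by
  have hJ := convexOn_toReal_setOf_ne_top hJ_ne_bot hJ_convex
  have hJ_coe : ∀ x ∈ {x | J x ≠ ⊤}, J x = ((J x).toReal : EReal) :=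
    fun x hx => (EReal.coe_toReal hx (hJ_ne_bot x)).symm
  have hz : J z ≠ ⊤ := fun h => by simp [hΘ, h] at hz_fin
  have hzp : J zp ≠ ⊤ := fun h => by
    have := (hzp_min z).trans_lt ((hΘρ z z).trans_lt (by simpa [hΘ] using hz_fin))
    rw [hΘρ, h, EReal.top_add_coe, EReal.top_add_coe] at this
    exact lt_irrefl _ this
  let model := (fderiv ℝ c z).toAffineMap + AffineMap.const ℝ _ (c z - fderiv ℝ c z z)
  have hmodel : ∀ x, model x = c z + fderiv ℝ c z (x - z) := fun x => by
    simp [model, map_sub]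
    abel
  have hprox : (J zp).toReal + H (c z + fderiv ℝ c z (zp - z)) + 1 / ρ * ‖zp - z‖ ^ 2
      ≤ (J z).toReal + H (c z) := by
    have h := (hJ.add ((hH_convex.comp_affineMap model).subset (subset_univ _) hJ.1)
      ).add_norm_sq_le_of_isMinOn_prox hρ hz hzp <| isMinOn_iff.2 fun x hx => by
        have := hzp_min x
        rw [hΘρ, hΘρ, hJ_coe x hx, hJ_coe zp hzp] at this
        simp only [Pi.add_apply, Function.comp_apply, hmodel]
        exact_mod_cast this
    simpa only [Pi.add_apply, Function.comp_apply, hmodel, sub_self, map_zero, add_zero] using h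
  have hlin : H (c zp) ≤ H (c z + fderiv ℝ c z (zp - z)) + α * β * ‖zp - z‖ ^ 2 :=
    hH_lip.le_add_of_lipschitzWith_fderiv (hc.differentiable one_ne_zero) hc_lip z zp
  rw [hΘ, hΘ, hJ_coe z hz, hJ_coe zp hzp, ← EReal.coe_add, ← EReal.coe_add, ← EReal.coe_sub,
    EReal.coe_le_coe_iff, norm_sub_rev]
  linarith

/-- Monotone-decrease inequality of the prox-linear method: with
`Θ = J + H ∘ c` (J proper lsc convex with values in `ℝ ∪ {+∞}`, H convex
`α`-Lipschitz, c continuously differentiable with `β`-Lipschitz Jacobian), if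
`z₊` minimizes the prox-linear subproblem `Θ^ρ(·; z)` and `ρ ≤ 1/(αβ)`, then
`Θ(z₊) ≤ Θ(z) − (1/ρ − αβ)·‖z − z₊‖²`. -/
theorem proxlinear_monotone_decrease
    (n m : ℕ) (α β ρ : ℝ) (hα : 0 < α) (hβ : 0 < β) (hρ : 0 < ρ)
    (hρle : ρ ≤ 1 / (α * β))
    (J : EuclideanSpace ℝ (Fin n) → EReal)
    (hJ_ne_bot : ∀ z, J z ≠ ⊥)
    (hJ_proper : ∃ z, J z ≠ ⊤)
    (hJ_lsc : LowerSemicontinuous J)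
    (hJ_convex : ∀ z w : EuclideanSpace ℝ (Fin n), ∀ θ : ℝ, 0 ≤ θ → θ ≤ 1 →
      J (θ • z + (1 - θ) • w) ≤ ((θ : ℝ) : EReal) * J z + (((1 - θ) : ℝ) : EReal) * J w)
    (H : EuclideanSpace ℝ (Fin m) → ℝ)
    (hH_convex : ConvexOn ℝ Set.univ H)
    (hH_lip : LipschitzWith ⟨α, hα.le⟩ H)
    (c : EuclideanSpace ℝ (Fin n) → EuclideanSpace ℝ (Fin m))
    (hc : ContDiff ℝ 1 c)
    (hc_lip : LipschitzWith ⟨β, hβ.le⟩ (fderiv ℝ c))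
    (Θ : EuclideanSpace ℝ (Fin n) → EReal)
    (hΘ : ∀ z, Θ z = J z + ((H (c z) : ℝ) : EReal))
    (Θρ : EuclideanSpace ℝ (Fin n) → EuclideanSpace ℝ (Fin n) → EReal)
    (hΘρ : ∀ z w, Θρ z w =
      J z + ((H (c w + fderiv ℝ c w (z - w)) : ℝ) : EReal)
        + ((1 / (2 * ρ) * ‖z - w‖ ^ 2 : ℝ) : EReal))
    (z zp : EuclideanSpace ℝ (Fin n))
    (hz_fin : Θ z < ⊤)
    (hzp_min : ∀ z', Θρ zp z ≤ Θρ z' z) :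
    Θ zp ≤ Θ z - (((1 / ρ - α * β) * ‖z - zp‖ ^ 2 : ℝ) : EReal) :=
  proxlinear_monotone_decrease_general n m α β ρ hα hβ hρ J hJ_ne_bot hJ_convex H hH_convex hH_lip c
    hc hc_lip Θ hΘ Θρ hΘρ z zp hz_fin hzp_min
end
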